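/- Normal form theorem for XPath↓⁻: let φ be an XP⁻-consistent node expression of XPath↓⁻ with dd(φ)=n; then XP⁻⊢φ≡⋁_{1≤i≤k}φᵢ for some φ₁,…,φ_k∈N̂ₙ. Let α be an XP⁻-consistent path expression of XPath↓⁻ with dd(α)=n; then XP⁻⊢α≡⋃_{1≤i≤k}[φᵢ]αᵢ for some α₁,…,α_k∈P̂ₙ and φ₁,…,φ_k∈N̂ₙ; moreover, if α is ε or starts with ↓, then XP⁻⊢α≡⋃_{1≤i≤k}αᵢ for some α₁,…,α_k∈P̂ₙ. -/

import Mathlib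

attribute [local instance] Classical.propDecidable

mutual
/-- Path expressions of `XPath↓⁻` (no inequality tests in the language). -/
inductive PathExpr (A : Type) : Type
  | eps : PathExpr A
  | down : PathExpr A
  | test : NodeExpr A → PathExpr A
  | comp : PathExpr A → PathExpr A → PathExpr A
  | union : PathExpr A → PathExpr A → PathExpr A

/-- Node expressions of `XPath↓⁻` (no inequality tests in the language). -/
inductive NodeExpr (A : Type) : Type
  | lab : A → NodeExpr A
  | neg : NodeExpr A → NodeExpr A
  | conj : NodeExpr A → NodeExpr A → NodeExpr A
  | diam : PathExpr A → NodeExpr A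
  | eqTest : PathExpr A → PathExpr A → NodeExpr A
end

namespace XPathMinus

variable {A : Type}

/-- Defined disjunction `φ ∨ ψ := ¬(¬φ ∧ ¬ψ)`. -/
def nOr (φ ψ : NodeExpr A) : NodeExpr A := .neg (.conj (.neg φ) (.neg ψ))

/-- `⊤ := ⟨ε⟩`. -/
def topN : NodeExpr A := .diam .eps

/-- `⊥ := ¬⊤`. -/
def botN : NodeExpr A := .neg topN

/-- `⊥̄ := [¬⟨ε⟩]`. -/
def botP : PathExpr A := .test (.neg (.diam .eps))

def bigOr (l : List (NodeExpr A)) : NodeExpr A := l.foldr nOr botN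

def bigUnion (l : List (PathExpr A)) : PathExpr A := l.foldr PathExpr.union botP

/-- A data tree: a tree (connected, acyclic, unique parents except the root)
whose nodes carry labels from `A`, together with a partition of the nodes
(presented as an equivalence relation `eqd`). -/
structure DataTree (A : Type) where
  X : Type
  child : X → X → Prop
  root : X
  label : X → A
  eqd : X → X → Prop
  eqd_equiv : Equivalence eqd
  parent_unique : ∀ ⦃x y z : X⦄, child x z → child y z → x = y
  root_no_parent : ∀ x : X, ¬ child x root
  reach : ∀ x : X, Relation.ReflTransGen child root x
  acyclic : ∀ x : X, ¬ Relation.TransGen child x x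

mutual
/-- Semantics of path expressions. -/
def psem (T : DataTree A) : PathExpr A → T.X → T.X → Prop
  | .eps, x, y => x = y
  | .down, x, y => T.child x y
  | .test φ, x, y => x = y ∧ nsem T φ x
  | .comp α β, x, z => ∃ y, psem T α x y ∧ psem T β y z
  | .union α β, x, y => psem T α x y ∨ psem T β x y

/-- Semantics of node expressions. -/
def nsem (T : DataTree A) : NodeExpr A → T.X → Prop
  | .lab a, x => T.label x = a
  | .neg φ, x => ¬ nsem T φ x
  | .conj φ ψ, x => nsem T φ x ∧ nsem T ψ x
  | .diam α, x => ∃ y, psem T α x y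
  | .eqTest α β, x => ∃ y z, psem T α x y ∧ psem T β x z ∧ T.eqd y z
end

/-- Semantic equivalence of node expressions: same denotation in every data tree. -/
def nodeValid (φ ψ : NodeExpr A) : Prop :=
  ∀ (T : DataTree A) (x : T.X), nsem T φ x ↔ nsem T ψ x

/-- Semantic equivalence of path expressions: same denotation in every data tree. -/
def pathValid (α β : PathExpr A) : Prop :=
  ∀ (T : DataTree A) (x y : T.X), psem T α x y ↔ psem T β x y

mutual
/-- Derivability of node equivalences in the axiomatic system `XP⁻`. -/
inductive NDer {A : Type} [Fintype A] : NodeExpr A → NodeExpr A → Prop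
  | refl (φ : NodeExpr A) : NDer φ φ
  | symm {φ ψ : NodeExpr A} : NDer φ ψ → NDer ψ φ
  | trans {φ ψ ρ : NodeExpr A} : NDer φ ψ → NDer ψ ρ → NDer φ ρ
  | congr_neg {φ ψ : NodeExpr A} : NDer φ ψ → NDer (.neg φ) (.neg ψ)
  | congr_conj {φ φ' ψ ψ' : NodeExpr A} :
      NDer φ φ' → NDer ψ ψ' → NDer (.conj φ ψ) (.conj φ' ψ')
  | congr_diam {α β : PathExpr A} : PDer α β → NDer (.diam α) (.diam β)
  | congr_eqTest {α α' β β' : PathExpr A} :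
      PDer α α' → PDer β β' → NDer (.eqTest α β) (.eqTest α' β')
  | lbAx1 : NDer topN (bigOr ((Finset.univ : Finset A).toList.map NodeExpr.lab))
  | lbAx2 {a b : A} : a ≠ b → NDer botN (.conj (.lab a) (.lab b))
  | ndAx1 (φ ψ : NodeExpr A) :
      NDer φ (nOr (.neg (nOr (.neg φ) ψ)) (.neg (nOr (.neg φ) (.neg ψ))))
  | ndAx2 (φ : NodeExpr A) : NDer (.diam (.test φ)) φ
  | ndAx3 (α β : PathExpr A) : NDer (.diam (.union α β)) (nOr (.diam α) (.diam β))
  | ndAx4 (α β : PathExpr A) : NDer (.diam (.comp α β)) (.diam (.comp α (.test (.diam β))))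
  | eqAx1 (α β : PathExpr A) : NDer (.eqTest α β) (.eqTest β α)
  | eqAx2 (α β γ : PathExpr A) :
      NDer (.eqTest (.union α β) γ) (nOr (.eqTest α γ) (.eqTest β γ))
  | eqAx3 (φ : NodeExpr A) (α β : PathExpr A) :
      NDer (.conj φ (.eqTest α β)) (.eqTest (.comp (.test φ) α) β)
  | eqAx4 (α β : PathExpr A) : NDer (nOr (.eqTest α β) (.diam α)) (.diam α)
  | eqAx5 (γ α β : PathExpr A) :
      NDer (nOr (.diam (.comp γ (.test (.eqTest α β)))) (.eqTest (.comp γ α) (.comp γ β)))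
        (.eqTest (.comp γ α) (.comp γ β))
  | eqAx6 (α : PathExpr A) : NDer (.eqTest α α) (.diam α)
  | eqAx7 (α β : PathExpr A) :
      NDer (nOr (.conj (.eqTest α .eps) (.eqTest β .eps)) (.eqTest α β)) (.eqTest α β)
  | eqAx8 (α β γ : PathExpr A) :
      NDer (nOr (.eqTest α (.comp β (.test (.eqTest .eps γ)))) (.eqTest α (.comp β γ)))
        (.eqTest α (.comp β γ))

/-- Derivability of path equivalences in the axiomatic system `XP⁻`. -/
inductive PDer {A : Type} [Fintype A] : PathExpr A → PathExpr A → Prop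
  | refl (α : PathExpr A) : PDer α α
  | symm {α β : PathExpr A} : PDer α β → PDer β α
  | trans {α β γ : PathExpr A} : PDer α β → PDer β γ → PDer α γ
  | congr_test {φ ψ : NodeExpr A} : NDer φ ψ → PDer (.test φ) (.test ψ)
  | congr_comp {α α' β β' : PathExpr A} :
      PDer α α' → PDer β β' → PDer (.comp α β) (.comp α' β')
  | congr_union {α α' β β' : PathExpr A} :
      PDer α α' → PDer β β' → PDer (.union α β) (.union α' β')
  | prAx1 (α β : PathExpr A) : PDer (.comp (.comp α (.test (.neg (.diam β)))) β) botP
  | prAx2 : PDer (.test topN) (.eps : PathExpr A)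
  | prAx3 (φ ψ : NodeExpr A) : PDer (.test (nOr φ ψ)) (.union (.test φ) (.test ψ))
  | isAx1 (α β γ : PathExpr A) : PDer (.union (.union α β) γ) (.union α (.union β γ))
  | isAx2 (α β : PathExpr A) : PDer (.union α β) (.union β α)
  | isAx3 (α : PathExpr A) : PDer (.union α α) α
  | isAx4 (α β γ : PathExpr A) : PDer (.comp α (.comp β γ)) (.comp (.comp α β) γ)
  | isAx5l (α : PathExpr A) : PDer (.comp .eps α) α
  | isAx5r (α : PathExpr A) : PDer (.comp α .eps) α
  | isAx6l (α β γ : PathExpr A) :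
      PDer (.comp α (.union β γ)) (.union (.comp α β) (.comp α γ))
  | isAx6r (α β γ : PathExpr A) :
      PDer (.comp (.union α β) γ) (.union (.comp α γ) (.comp β γ))
  | isAx7 (α : PathExpr A) : PDer (.union botP α) α
end

/-- A node expression is `XP⁻`-consistent if it is not provably equivalent to `⊥`. -/
def NConsistent [Fintype A] (φ : NodeExpr A) : Prop := ¬ NDer φ botN

/-- A path expression is `XP⁻`-consistent if it is not provably equivalent to `⊥̄`. -/
def PConsistent [Fintype A] (α : PathExpr A) : Prop := ¬ PDer α botP

/-- The normal form `a ∧ ⋀_{d ∈ C} d ∧ ⋀_{d ∈ D∖C} ¬d`, built along the canonical listing `D`. -/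
noncomputable def mkNF (a : A) (C D : List (NodeExpr A)) : NodeExpr A :=
  D.foldl (fun acc d => .conj acc (if d ∈ C then d else .neg d)) (.lab a)

/-- The canonical lists of normal-form path expressions (first component)
and normal-form node expressions (second component) at each level. -/
noncomputable def NF (A : Type) [Fintype A] : ℕ → List (PathExpr A) × List (NodeExpr A)
  | 0 =>
    ([.eps],
      (Finset.univ : Finset A).toList.map fun a =>
        NodeExpr.conj (.lab a) (.eqTest .eps .eps))
  | n+1 =>
    let P := (NF A n).1
    let N := (NF A n).2
    let P' : List (PathExpr A) :=
      .eps :: N.flatMap fun ψ => P.map fun β => PathExpr.comp .down (.comp (.test ψ) β)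
    let D : List (NodeExpr A) :=
      P'.flatMap fun α => P'.map fun β => NodeExpr.eqTest α β
    let cands : List (NodeExpr A) :=
      D.sublists.flatMap fun C => (Finset.univ : Finset A).toList.map fun a => mkNF a C D
    (P', cands.filter fun φ => decide (NConsistent φ))

/-- `P̂ₙ`: normal-form path expressions of level `n`. -/
noncomputable def Pnf (A : Type) [Fintype A] (n : ℕ) : Set (PathExpr A) :=
  {α | α ∈ (NF A n).1}

/-- `N̂ₙ`: normal-form node expressions of level `n`. -/
noncomputable def Nnf (A : Type) [Fintype A] (n : ℕ) : Set (NodeExpr A) :=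
  {φ | φ ∈ (NF A n).2}

/-- `D̂ₙ`: data-aware diamonds between normal-form paths of level `n`. -/
noncomputable def Dnf (A : Type) [Fintype A] (n : ℕ) : Set (NodeExpr A) :=
  {φ | ∃ α ∈ Pnf A n, ∃ β ∈ Pnf A n, φ = NodeExpr.eqTest α β}

/-- The conjuncts of a node expression (flattening `∧`). -/
def conjuncts : NodeExpr A → List (NodeExpr A)
  | .conj φ ψ => conjuncts φ ++ conjuncts ψ
  | φ => [φ]

/-- `δ` is a conjunct of `ψ`. -/
def IsConjunct (δ ψ : NodeExpr A) : Prop := δ ∈ conjuncts ψ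

/-- Length of a path expression. -/
def plen : PathExpr A → ℕ
  | .eps => 0
  | .down => 1
  | .test _ => 0
  | .comp α β => plen α + plen β
  | .union α β => max (plen α) (plen β)

mutual
/-- Downward depth of a node expression. -/
def ndd : NodeExpr A → ℕ
  | .lab _ => 0
  | .neg φ => ndd φ
  | .conj φ ψ => max (ndd φ) (ndd ψ)
  | .diam α => pdd α
  | .eqTest α β => max (pdd α) (pdd β)

/-- Downward depth of a path expression. -/
def pdd : PathExpr A → ℕ
  | .eps => 0
  | .down => 1
  | .test φ => ndd φ
  | .comp α β => max (max (pdd α) (pdd β)) (plen α + pdd β)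
  | .union α β => max (pdd α) (pdd β)
end

/-- The path `↓[ψ]α`. -/
def dPath (ψ : NodeExpr A) (α : PathExpr A) : PathExpr A :=
  .comp .down (.comp (.test ψ) α)

/-- A path expression whose leftmost symbol is `↓`. -/
def startsWithDown : PathExpr A → Prop
  | .down => True
  | .comp α _ => startsWithDown α
  | _ => False

end XPathMinus

/-!
Call the members of `N̂ₙ` the types of level `n`. Distinct types of one level are provably
disjoint, and their disjunction is provably `⊤`: expand every label into all sign patterns on
the atoms `D̂ₙ` and drop the inconsistent conjunctions. Hence a node expression is provably a
disjunction of types of level `n` as soon as each such type proves it or refutes it, and this is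
preserved by the Boolean connectives. A type decides the atoms `⟨α=β⟩`, `α, β ∈ P̂ₙ`, and hence
also `⟨[t]σ⟩` and `⟨[t]σ = [t']σ'⟩` for guarded paths `[t]σ` of its level.

A simultaneous induction on expressions then shows that node expressions of depth `≤ n` are
disjunctions of types of level `n`, and path expressions `α` of depth `≤ n` are unions of guarded
paths `[t]σ` of level `n` with `len σ ≤ len α` (and unions of non-`ε` paths of `P̂ₙ` if `α`
starts with `↓`). The only delicate case is a composition `γδ`: a summand `[t]σ[t']σ'`, with
`[t']σ'` normalised at level `dd δ`, is renormalised by pushing `[t']σ'` down the `len σ` steps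
of `σ`, which stays within level `n` because `len γ + dd δ ≤ n`; normal forms of lower levels
are lifted to level `n` on the way.
-/

namespace XPathMinus

open NodeExpr PathExpr

variable {A : Type}

def conjMap {ι : Type*} (h : ι → NodeExpr A) (acc : NodeExpr A) (D : List ι) : NodeExpr A :=
  D.foldl (fun acc d => .conj acc (h d)) acc

noncomputable def literal (C : List (NodeExpr A)) (d : NodeExpr A) : NodeExpr A :=
  if d ∈ C then d else .neg d

/-- For `P = P̂ₙ` this lists `D̂ₙ`. -/
def eqAtoms (P : List (PathExpr A)) : List (NodeExpr A) :=
  P.flatMap fun α => P.map fun β => .eqTest α β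

theorem mem_eqAtoms {P : List (PathExpr A)} {d : NodeExpr A} :
    d ∈ eqAtoms P ↔ ∃ α ∈ P, ∃ β ∈ P, d = .eqTest α β := by
  simp only [eqAtoms, List.mem_flatMap, List.mem_map, eq_comm]

variable [Fintype A]

def NLe (φ ψ : NodeExpr A) : Prop := NDer (nOr φ ψ) ψ

def PLe (α β : PathExpr A) : Prop := PDer (.union α β) β

def Decides (t φ : NodeExpr A) : Prop := NDer (.conj t φ) t ∨ NDer (.conj t φ) botN

section Boolean

variable {φ φ' ψ ψ' ρ : NodeExpr A}

namespace NDer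

theorem nOr_congr (h₁ : NDer φ φ') (h₂ : NDer ψ ψ') : NDer (nOr φ ψ) (nOr φ' ψ') :=
  .congr_neg (.congr_conj (.congr_neg h₁) (.congr_neg h₂))

/- Disjunction is reflected into union of tests, so the lattice laws of `∨` come from the
semilattice axioms of `∪`. -/
theorem nOr_diam_union (φ ψ : NodeExpr A) :
    NDer (nOr φ ψ) (.diam (.union (.test φ) (.test ψ))) :=
  (nOr_congr (ndAx2 φ).symm (ndAx2 ψ).symm).trans (ndAx3 _ _).symm

theorem nOr_comm (φ ψ : NodeExpr A) : NDer (nOr φ ψ) (nOr ψ φ) :=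
  ((nOr_diam_union φ ψ).trans (.congr_diam (.isAx2 _ _))).trans (nOr_diam_union ψ φ).symm

theorem nOr_idem (φ : NodeExpr A) : NDer (nOr φ φ) φ :=
  ((nOr_diam_union φ φ).trans (.congr_diam (.isAx3 _))).trans (ndAx2 φ)

theorem botN_nOr (φ : NodeExpr A) : NDer (nOr botN φ) φ :=
  ((nOr_diam_union botN φ).trans (.congr_diam (.isAx7 _))).trans (ndAx2 φ)

theorem nOr_botN (φ : NodeExpr A) : NDer (nOr φ botN) φ :=
  (nOr_comm _ _).trans (botN_nOr φ)

theorem nOr_assoc (φ ψ ρ : NodeExpr A) : NDer (nOr (nOr φ ψ) ρ) (nOr φ (nOr ψ ρ)) := by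
  have h₁ : NDer (nOr (nOr φ ψ) ρ) (.diam (.union (.union (.test φ) (.test ψ)) (.test ρ))) :=
    (nOr_diam_union _ _).trans (.congr_diam (.congr_union (.prAx3 φ ψ) (.refl _)))
  have h₂ : NDer (nOr φ (nOr ψ ρ)) (.diam (.union (.test φ) (.union (.test ψ) (.test ρ)))) :=
    (nOr_diam_union _ _).trans (.congr_diam (.congr_union (.refl _) (.prAx3 ψ ρ)))
  exact (h₁.trans (.congr_diam (.isAx1 _ _ _))).trans h₂.symm

theorem topN_nOr_neg (ψ : NodeExpr A) : NDer topN (nOr (.neg ψ) (.neg (.neg ψ))) :=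
  (ndAx1 topN ψ).trans (nOr_congr (.congr_neg (botN_nOr ψ)) (.congr_neg (botN_nOr _)))

theorem neg_neg (φ : NodeExpr A) : NDer (.neg (.neg φ)) φ := by
  have h : NDer φ (nOr (.neg (.neg φ)) (.neg topN)) :=
    (ndAx1 φ (.neg φ)).trans
      (nOr_congr (.congr_neg (nOr_idem _)) (.congr_neg (topN_nOr_neg φ).symm))
  exact (h.trans (nOr_botN _)).symm

theorem nOr_neg_self (φ : NodeExpr A) : NDer (nOr φ (.neg φ)) topN :=
  (nOr_comm _ _).trans ((topN_nOr_neg φ).trans (nOr_congr (.refl _) (neg_neg φ))).symm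

theorem conj_neg_nOr_neg (φ ψ : NodeExpr A) :
    NDer (.conj φ ψ) (.neg (nOr (.neg φ) (.neg ψ))) :=
  (congr_conj (neg_neg φ).symm (neg_neg ψ).symm).trans (neg_neg _).symm

theorem conj_comm (φ ψ : NodeExpr A) : NDer (.conj φ ψ) (.conj ψ φ) :=
  ((conj_neg_nOr_neg φ ψ).trans (.congr_neg (nOr_comm _ _))).trans (conj_neg_nOr_neg ψ φ).symm

theorem conj_assoc (φ ψ ρ : NodeExpr A) :
    NDer (.conj (.conj φ ψ) ρ) (.conj φ (.conj ψ ρ)) := by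
  have h₁ : NDer (.conj (.conj φ ψ) ρ) (.neg (nOr (nOr (.neg φ) (.neg ψ)) (.neg ρ))) :=
    ((congr_conj (conj_neg_nOr_neg φ ψ) (.refl ρ)).trans (conj_neg_nOr_neg _ _)).trans
      (.congr_neg (nOr_congr (neg_neg _) (.refl _)))
  have h₂ : NDer (.conj φ (.conj ψ ρ)) (.neg (nOr (.neg φ) (nOr (.neg ψ) (.neg ρ)))) :=
    ((congr_conj (.refl φ) (conj_neg_nOr_neg ψ ρ)).trans (conj_neg_nOr_neg _ _)).trans
      (.congr_neg (nOr_congr (.refl _) (neg_neg _)))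
  exact (h₁.trans (.congr_neg (nOr_assoc _ _ _))).trans h₂.symm

theorem conj_idem (φ : NodeExpr A) : NDer (.conj φ φ) φ :=
  ((conj_neg_nOr_neg φ φ).trans (.congr_neg (nOr_idem _))).trans (neg_neg φ)

theorem topN_nOr (φ : NodeExpr A) : NDer (nOr topN φ) topN := by
  have h : NDer (nOr (nOr φ (.neg φ)) φ) (nOr (nOr φ φ) (.neg φ)) :=
    ((nOr_assoc _ _ _).trans (nOr_congr (.refl _) (nOr_comm _ _))).trans (nOr_assoc _ _ _).symm
  exact (((nOr_congr (nOr_neg_self φ).symm (.refl φ)).trans h).trans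
    (nOr_congr (nOr_idem φ) (.refl _))).trans (nOr_neg_self φ)

theorem conj_topN (φ : NodeExpr A) : NDer (.conj φ topN) φ :=
  ((conj_neg_nOr_neg φ topN).trans (.congr_neg (nOr_botN _))).trans (neg_neg φ)

theorem botN_conj (φ : NodeExpr A) : NDer (.conj botN φ) botN :=
  ((conj_neg_nOr_neg botN φ).trans
    (.congr_neg (nOr_congr (neg_neg topN) (.refl _)))).trans (.congr_neg (topN_nOr _))

theorem conj_botN (φ : NodeExpr A) : NDer (.conj φ botN) botN :=
  (conj_comm _ _).trans (botN_conj φ)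

theorem conj_neg_self (φ : NodeExpr A) : NDer (.conj φ (.neg φ)) botN :=
  ((conj_neg_nOr_neg _ _).trans (.congr_neg (nOr_congr (.refl _) (neg_neg _)))).trans
    (.congr_neg ((nOr_comm _ _).trans (nOr_neg_self φ)))

end NDer

namespace NLe

theorem of_der (h : NDer φ ψ) : NLe φ ψ :=
  (NDer.nOr_congr h (.refl _)).trans (NDer.nOr_idem ψ)

theorem refl (φ : NodeExpr A) : NLe φ φ := NDer.nOr_idem φ

theorem congr (h₁ : NDer φ φ') (h₂ : NDer ψ ψ') (h : NLe φ ψ) : NLe φ' ψ' :=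
  ((NDer.nOr_congr h₁.symm h₂.symm).trans h).trans h₂

theorem trans (h₁ : NLe φ ψ) (h₂ : NLe ψ ρ) : NLe φ ρ :=
  ((((NDer.nOr_congr (.refl φ) h₂.symm).trans (NDer.nOr_assoc _ _ _).symm).trans
    (NDer.nOr_congr h₁ (.refl ρ))).trans h₂)

theorem antisymm (h₁ : NLe φ ψ) (h₂ : NLe ψ φ) : NDer φ ψ :=
  (h₂.symm.trans (NDer.nOr_comm _ _)).trans h₁

theorem eq_botN (h : NLe φ botN) : NDer φ botN :=
  h.antisymm (NDer.botN_nOr φ)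

end NLe

theorem botN_nle (φ : NodeExpr A) : NLe botN φ := NDer.botN_nOr φ

theorem nle_topN (φ : NodeExpr A) : NLe φ topN := (NDer.nOr_comm _ _).trans (NDer.topN_nOr φ)

theorem nle_nOr_left (φ ψ : NodeExpr A) : NLe φ (nOr φ ψ) :=
  (NDer.nOr_assoc φ φ ψ).symm.trans (NDer.nOr_congr (NDer.nOr_idem φ) (.refl ψ))

theorem nle_nOr_right (φ ψ : NodeExpr A) : NLe ψ (nOr φ ψ) :=
  (nle_nOr_left ψ φ).congr (.refl ψ) (NDer.nOr_comm ψ φ)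

theorem nOr_nle (h₁ : NLe φ ρ) (h₂ : NLe ψ ρ) : NLe (nOr φ ψ) ρ :=
  ((NDer.nOr_assoc φ ψ ρ).trans (NDer.nOr_congr (.refl φ) h₂)).trans h₁

namespace NDer

theorem eqTest_test_self (ψ : NodeExpr A) : NDer (.eqTest (.test ψ) (.test ψ)) ψ :=
  (eqAx6 _).trans (ndAx2 ψ)

/- Conjunction is expressed by a data test, `φ ∧ ψ ≡ ⟨[φ][ψ] = [ψ]⟩`; the data axioms then
give distributivity. -/
theorem conj_eqTest (φ ψ : NodeExpr A) :
    NDer (.conj φ ψ) (.eqTest (.comp (.test φ) (.test ψ)) (.test ψ)) :=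
  (congr_conj (.refl φ) (eqTest_test_self ψ).symm).trans (eqAx3 φ (.test ψ) (.test ψ))

theorem diam_test_comp_test (φ ψ : NodeExpr A) :
    NDer (.diam (.comp (.test φ) (.test ψ))) (.conj φ ψ) := by
  have h : NDer (.eqTest (.test ψ) (.comp (.test φ) (.test ψ))) (.conj φ ψ) :=
    (eqAx1 _ _).trans (conj_eqTest φ ψ).symm
  exact ((((eqAx6 _).symm.trans (eqAx3 φ (.test ψ) _).symm).trans (congr_conj (.refl φ) h)).trans
    (conj_assoc φ φ ψ).symm).trans (congr_conj (conj_idem φ) (.refl ψ))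

theorem eqTest_test_comp_test_union (φ ψ ρ : NodeExpr A) :
    NDer (.eqTest (.comp (.test φ) (.test ψ)) (.union (.test ψ) (.test ρ))) (.conj φ ψ) := by
  have hψ : NDer (.eqTest (.test ψ) (.comp (.test φ) (.test ψ))) (.conj φ ψ) :=
    (eqAx1 _ _).trans (conj_eqTest φ ψ).symm
  have hρ : NLe (.eqTest (.test ρ) (.comp (.test φ) (.test ψ))) (.conj φ ψ) :=
    NLe.congr (eqAx1 _ _) (diam_test_comp_test φ ψ) (eqAx4 _ (.test ρ))
  exact ((eqAx1 _ _).trans (eqAx2 _ _ _)).trans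
    ((nOr_nle (.of_der hψ) hρ).antisymm ((NLe.of_der hψ.symm).trans (nle_nOr_left _ _)))

theorem conj_nOr_distrib (φ ψ ρ : NodeExpr A) :
    NDer (.conj φ (nOr ψ ρ)) (nOr (.conj φ ψ) (.conj φ ρ)) := by
  have h : NDer (.conj φ (nOr ψ ρ))
      (.eqTest (.union (.comp (.test φ) (.test ψ)) (.comp (.test φ) (.test ρ)))
        (.union (.test ψ) (.test ρ))) :=
    (conj_eqTest φ (nOr ψ ρ)).trans
      (.congr_eqTest ((PDer.congr_comp (.refl _) (.prAx3 ψ ρ)).trans (.isAx6l _ _ _))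
        (.prAx3 ψ ρ))
  exact (h.trans (eqAx2 _ _ _)).trans (nOr_congr (eqTest_test_comp_test_union φ ψ ρ)
    ((congr_eqTest (.refl _) (.isAx2 _ _)).trans (eqTest_test_comp_test_union φ ρ ψ)))

theorem nOr_conj_self (φ ψ : NodeExpr A) : NDer (nOr φ (.conj φ ψ)) φ :=
  ((((nOr_congr (conj_topN φ).symm (.refl _)).trans (conj_nOr_distrib φ topN ψ).symm).trans
    (congr_conj (.refl φ) (topN_nOr ψ))).trans (conj_topN φ))

theorem conj_nOr_self (φ ψ : NodeExpr A) : NDer (.conj φ (nOr φ ψ)) φ :=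
  ((conj_nOr_distrib φ φ ψ).trans (nOr_congr (conj_idem φ) (.refl _))).trans (nOr_conj_self φ ψ)

theorem case_split (φ ψ : NodeExpr A) : NDer φ (nOr (.conj φ ψ) (.conj φ (.neg ψ))) :=
  ((conj_topN φ).symm.trans (congr_conj (.refl φ) (nOr_neg_self ψ).symm)).trans
    (conj_nOr_distrib _ _ _)

end NDer

theorem nle_conj_left (φ ψ : NodeExpr A) : NLe (.conj φ ψ) φ :=
  (NDer.nOr_comm _ _).trans (NDer.nOr_conj_self φ ψ)

theorem nle_conj_right (φ ψ : NodeExpr A) : NLe (.conj φ ψ) ψ :=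
  (nle_conj_left ψ φ).congr (NDer.conj_comm ψ φ) (.refl ψ)

theorem NLe.der_conj (h : NLe φ ψ) : NDer φ (.conj φ ψ) :=
  (NDer.conj_nOr_self φ ψ).symm.trans (.congr_conj (.refl φ) h)

theorem NLe.of_der_conj (h : NDer φ (.conj φ ψ)) : NLe φ ψ :=
  ((NDer.nOr_congr (h.trans (NDer.conj_comm _ _)) (.refl ψ)).trans (NDer.nOr_comm _ _)).trans
    (NDer.nOr_conj_self ψ φ)

theorem NLe.conj (h₁ : NLe ρ φ) (h₂ : NLe ρ ψ) : NLe ρ (.conj φ ψ) :=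
  .of_der_conj ((h₂.der_conj.trans (.congr_conj h₁.der_conj (.refl ψ))).trans
    (NDer.conj_assoc ρ φ ψ))

theorem NLe.conj_mono (h₁ : NLe φ φ') (h₂ : NLe ψ ψ') : NLe (.conj φ ψ) (.conj φ' ψ') :=
  ((nle_conj_left φ ψ).trans h₁).conj ((nle_conj_right φ ψ).trans h₂)

end Boolean

section Paths

variable {α α' β : PathExpr A} {φ ψ θ : NodeExpr A}

theorem PLe.test (h : NLe φ ψ) : PLe (.test φ) (.test ψ) :=
  (PDer.prAx3 φ ψ).symm.trans (.congr_test h)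

theorem PLe.comp_right (γ : PathExpr A) (h : PLe α α') : PLe (.comp α γ) (.comp α' γ) :=
  (PDer.isAx6r α α' γ).symm.trans (.congr_comp h (.refl γ))

theorem PLe.der_botP (h : PLe α β) (hβ : PDer β botP) : PDer α botP :=
  (PDer.isAx7 α).symm.trans
    ((PDer.isAx2 _ _).trans (((PDer.congr_union (.refl α) hβ.symm).trans h).trans hβ))

namespace PDer

theorem union_of_botP (h : PDer β botP) : PDer (.union α β) α :=
  ((congr_union (.refl α) h).trans (isAx2 _ _)).trans (isAx7 α)

theorem test_neg_diam_comp (β : PathExpr A) : PDer (.comp (.test (.neg (.diam β))) β) botP :=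
  (congr_comp (isAx5l _).symm (.refl β)).trans (prAx1 .eps β)

theorem test_neg_comp_test (ψ : NodeExpr A) : PDer (.comp (.test (.neg ψ)) (.test ψ)) botP :=
  (congr_comp (congr_test (.congr_neg (NDer.ndAx2 ψ).symm)) (.refl _)).trans
    (test_neg_diam_comp _)

theorem test_comp_test_neg (ψ : NodeExpr A) : PDer (.comp (.test ψ) (.test (.neg ψ))) botP :=
  (congr_comp (congr_test ((NDer.neg_neg ψ).symm.trans
    (.congr_neg (NDer.ndAx2 (.neg ψ)).symm))) (.refl _)).trans (test_neg_diam_comp _)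

theorem comp_botP (α : PathExpr A) : PDer (.comp α botP) botP :=
  (isAx5r _).symm.trans (prAx1 α .eps)

theorem botP_comp (α : PathExpr A) : PDer (.comp botP α) botP :=
  ((PLe.test (botN_nle (.neg (.diam α)))).comp_right α).der_botP (test_neg_diam_comp α)

theorem test_topN_comp (α : PathExpr A) : PDer (.comp (.test topN) α) α :=
  (congr_comp prAx2 (.refl α)).trans (isAx5l α)

theorem eps_union (ψ : NodeExpr A) : PDer (.eps : PathExpr A) (.union (.test ψ) (.test (.neg ψ))) :=
  prAx2.symm.trans ((congr_test (NDer.nOr_neg_self ψ).symm).trans (prAx3 ψ (.neg ψ)))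

theorem test_comp_test_of_nle (h : NLe θ ψ) : PDer (.comp (.test θ) (.test ψ)) (.test θ) := by
  have hsplit : PDer (.test θ)
      (.union (.comp (.test θ) (.test ψ)) (.comp (.test θ) (.test (.neg ψ)))) :=
    ((isAx5r _).symm.trans (congr_comp (.refl _) (eps_union ψ))).trans (isAx6l _ _ _)
  have hbot : PDer (.comp (.test θ) (.test (.neg ψ))) botP :=
    ((PLe.test h).comp_right _).der_botP (test_comp_test_neg ψ)
  exact (hsplit.trans (union_of_botP hbot)).symm

theorem test_comp_test (φ ψ : NodeExpr A) :
    PDer (.comp (.test φ) (.test ψ)) (.test (.conj φ ψ)) := by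
  have hsplit : PDer (.comp (.test φ) (.test ψ))
      (.union (.comp (.test (.conj φ ψ)) (.test ψ)) (.comp (.test (.conj φ (.neg ψ))) (.test ψ))) :=
    (congr_comp ((congr_test (NDer.case_split φ ψ)).trans (prAx3 _ _)) (.refl _)).trans
      (isAx6r _ _ _)
  have hbot : PDer (.comp (.test (.conj φ (.neg ψ))) (.test ψ)) botP :=
    ((PLe.test (nle_conj_right φ (.neg ψ))).comp_right _).der_botP (test_neg_comp_test ψ)
  exact (hsplit.trans (union_of_botP hbot)).trans (test_comp_test_of_nle (nle_conj_right φ ψ))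

end PDer

namespace NDer

theorem diam_test_comp (φ : NodeExpr A) (α : PathExpr A) :
    NDer (.diam (.comp (.test φ) α)) (.conj φ (.diam α)) :=
  (ndAx4 (.test φ) α).trans (diam_test_comp_test φ (.diam α))

theorem diam_botP : NDer (.diam (botP : PathExpr A)) botN := ndAx2 botN

theorem eqTest_botP_left (β : PathExpr A) : NDer (.eqTest botP β) botN :=
  NLe.eq_botN (NLe.trans (eqAx4 botP β) (.of_der diam_botP))

end NDer

end Paths

section BigOperators

theorem nle_bigOr {φ : NodeExpr A} {l : List (NodeExpr A)} (h : φ ∈ l) : NLe φ (bigOr l) := by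
  induction l with
  | nil => cases h
  | cons ψ l ih =>
    rcases List.mem_cons.1 h with rfl | h
    · exact nle_nOr_left _ _
    · exact (ih h).trans (nle_nOr_right _ _)

theorem bigOr_nle {l : List (NodeExpr A)} {ψ : NodeExpr A} (h : ∀ φ ∈ l, NLe φ ψ) :
    NLe (bigOr l) ψ := by
  induction l with
  | nil => exact botN_nle ψ
  | cons φ l ih => exact nOr_nle (h φ (by simp)) (ih fun φ hφ => h φ (by simp [hφ]))

theorem bigUnion_append (l₁ l₂ : List (PathExpr A)) :
    PDer (bigUnion (l₁ ++ l₂)) (.union (bigUnion l₁) (bigUnion l₂)) := by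
  induction l₁ with
  | nil => exact (PDer.isAx7 _).symm
  | cons α l ih => exact (PDer.congr_union (.refl α) ih).trans (PDer.isAx1 _ _ _).symm

theorem bigUnion_singleton (α : PathExpr A) : PDer (bigUnion [α]) α :=
  (PDer.isAx2 _ _).trans (.isAx7 _)

theorem conj_bigOr (φ : NodeExpr A) (l : List (NodeExpr A)) :
    NDer (.conj φ (bigOr l)) (bigOr (l.map (.conj φ))) := by
  induction l with
  | nil => exact NDer.conj_botN φ
  | cons ψ l ih => exact (NDer.conj_nOr_distrib φ ψ _).trans (NDer.nOr_congr (.refl _) ih)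

theorem bigUnion_comp (l : List (PathExpr A)) (γ : PathExpr A) :
    PDer (.comp (bigUnion l) γ) (bigUnion (l.map (.comp · γ))) := by
  induction l with
  | nil => exact PDer.botP_comp γ
  | cons α l ih => exact (PDer.isAx6r α _ γ).trans (.congr_union (.refl _) ih)

theorem comp_bigUnion (γ : PathExpr A) (l : List (PathExpr A)) :
    PDer (.comp γ (bigUnion l)) (bigUnion (l.map (.comp γ))) := by
  induction l with
  | nil => exact PDer.comp_botP γ
  | cons α l ih => exact (PDer.isAx6l γ α _).trans (.congr_union (.refl _) ih)

theorem test_bigOr (l : List (NodeExpr A)) : PDer (.test (bigOr l)) (bigUnion (l.map .test)) := by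
  induction l with
  | nil => exact .refl _
  | cons φ l ih => exact (PDer.prAx3 φ _).trans (.congr_union (.refl _) ih)

theorem diam_bigUnion (l : List (PathExpr A)) :
    NDer (.diam (bigUnion l)) (bigOr (l.map .diam)) := by
  induction l with
  | nil => exact NDer.diam_botP
  | cons α l ih => exact (NDer.ndAx3 α _).trans (NDer.nOr_congr (.refl _) ih)

theorem eqTest_bigUnion_left (l : List (PathExpr A)) (β : PathExpr A) :
    NDer (.eqTest (bigUnion l) β) (bigOr (l.map (.eqTest · β))) := by
  induction l with
  | nil => exact NDer.eqTest_botP_left β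
  | cons α l ih => exact (NDer.eqAx2 α _ β).trans (NDer.nOr_congr (.refl _) ih)

end BigOperators

section Decides

variable {t φ ψ : NodeExpr A}

theorem Decides.congr (h : NDer φ ψ) (hd : Decides t φ) : Decides t ψ :=
  hd.imp (NDer.trans (.congr_conj (.refl t) h.symm)) (NDer.trans (.congr_conj (.refl t) h.symm))

theorem decides_of_nle (h : NLe t φ) : Decides t φ := .inl h.der_conj.symm

theorem decides_topN (t : NodeExpr A) : Decides t topN := .inl (NDer.conj_topN t)

theorem decides_botN (t : NodeExpr A) : Decides t botN := .inr (NDer.conj_botN t)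

theorem decides_self (t : NodeExpr A) : Decides t t := .inl (NDer.conj_idem t)

theorem Decides.neg (h : Decides t φ) : Decides t (.neg φ) := by
  rcases h with hφ | hφ
  · exact .inr (((NDer.congr_conj hφ.symm (.refl _)).trans (NDer.conj_assoc _ _ _)).trans
      ((NDer.congr_conj (.refl t) (NDer.conj_neg_self φ)).trans (NDer.conj_botN t)))
  · exact .inl (((NDer.case_split t φ).trans (NDer.nOr_congr hφ (.refl _))).trans
      (NDer.botN_nOr _)).symm

theorem Decides.conj (hφ : Decides t φ) (hψ : Decides t ψ) : Decides t (.conj φ ψ) := by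
  have hassoc := (NDer.conj_assoc t φ ψ).symm
  rcases hφ with hφ | hφ
  · exact hψ.imp (hassoc.trans (.congr_conj hφ (.refl ψ))).trans
      (hassoc.trans (.congr_conj hφ (.refl ψ))).trans
  · exact .inr (NLe.eq_botN (((NLe.refl t).conj_mono (nle_conj_left φ ψ)).trans (.of_der hφ)))

theorem Decides.nOr (hφ : Decides t φ) (hψ : Decides t ψ) : Decides t (nOr φ ψ) := by
  have h := NDer.conj_nOr_distrib t φ ψ
  rcases hφ with hφ | hφ
  · exact .inl ((h.trans (NDer.nOr_congr hφ (.refl _))).trans (NDer.nOr_conj_self t ψ))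
  · rcases hψ with hψ | hψ
    · exact .inl (((h.trans (NDer.nOr_comm _ _)).trans (NDer.nOr_congr hψ (.refl _))).trans
        (NDer.nOr_conj_self t φ))
    · exact .inr ((h.trans (NDer.nOr_congr hφ hψ)).trans (NDer.nOr_idem botN))

theorem decides_bigOr {l : List (NodeExpr A)} (h : ∀ φ ∈ l, Decides t φ) :
    Decides t (bigOr l) := by
  induction l with
  | nil => exact decides_botN t
  | cons φ l ih => exact (h φ (by simp)).nOr (ih fun φ hφ => h φ (by simp [hφ]))

end Decides

section Literals

variable {ι : Type*} {h : ι → NodeExpr A} {acc : NodeExpr A}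

theorem conjMap_nle_acc (D : List ι) (acc : NodeExpr A) : NLe (conjMap h acc D) acc := by
  induction D generalizing acc with
  | nil => exact .refl acc
  | cons d D ih => exact (ih _).trans (nle_conj_left acc (h d))

theorem conjMap_nle_of_mem {d : ι} {D : List ι} (hd : d ∈ D) : NLe (conjMap h acc D) (h d) := by
  induction D generalizing acc with
  | nil => cases hd
  | cons e D ih =>
    rcases List.mem_cons.1 hd with rfl | hd
    · exact (conjMap_nle_acc D _).trans (nle_conj_right acc (h d))
    · exact ih hd

theorem nle_conjMap {c : NodeExpr A} {D : List ι} (hacc : NLe c acc) (hD : ∀ d ∈ D, NLe c (h d)) :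
    NLe c (conjMap h acc D) := by
  induction D generalizing acc with
  | nil => exact hacc
  | cons d D ih => exact ih (hacc.conj (hD d (by simp))) fun e he => hD e (by simp [he])

theorem decides_conjMap {t : NodeExpr A} {D : List ι} (hacc : Decides t acc)
    (hD : ∀ d ∈ D, Decides t (h d)) : Decides t (conjMap h acc D) := by
  induction D generalizing acc with
  | nil => exact hacc
  | cons d D ih => exact ih (hacc.conj (hD d (by simp))) fun e he => hD e (by simp [he])

theorem nle_bigOr_conjMap_literal_of_nodup {D : List (NodeExpr A)} (hD : D.Nodup)
    (acc : NodeExpr A) :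
    NLe acc (bigOr (D.sublists.map fun C => conjMap (literal C) acc D)) := by
  induction D generalizing acc with
  | nil => exact nle_nOr_left acc botN
  | cons d₀ D ih =>
    obtain ⟨hd₀, hD⟩ := List.nodup_cons.1 hD
    refine ((NLe.of_der ((NDer.case_split acc d₀).trans (NDer.nOr_comm _ _)))).trans
      (nOr_nle ((ih hD _).trans (bigOr_nle ?_)) ((ih hD _).trans (bigOr_nle ?_)))
    all_goals
      simp only [List.mem_map]
      rintro _ ⟨C, hC, rfl⟩
      have hCD : List.Sublist C D := List.mem_sublists.1 hC
      have hd₀C : d₀ ∉ C := fun h => hd₀ (hCD.subset h)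
    · have hC' :
          conjMap (literal C) acc (d₀ :: D) = conjMap (literal C) (.conj acc (.neg d₀)) D := by
        rw [conjMap, List.foldl_cons, literal, if_neg hd₀C]; rfl
      rw [← hC']
      exact nle_bigOr (List.mem_map.2 ⟨C, List.mem_sublists.2 (hCD.cons d₀), rfl⟩)
    · have hC' :
          conjMap (literal (d₀ :: C)) acc (d₀ :: D) = conjMap (literal C) (.conj acc d₀) D := by
        rw [conjMap, List.foldl_cons, literal, if_pos List.mem_cons_self]
        refine List.foldl_ext _ _ _ fun acc d hd => ?_
        have hne : d ≠ d₀ := fun h => hd₀ (h ▸ hd)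
        simp only [literal, List.mem_cons, hne, false_or]
      rw [← hC']
      exact nle_bigOr (List.mem_map.2 ⟨d₀ :: C, List.mem_sublists.2 (hCD.cons_cons d₀), rfl⟩)

/- Duplicates in `D` are harmless: the literals of `D` and of `D.dedup` have the same
members, and sublists of `D.dedup` are sublists of `D`. -/
theorem nle_bigOr_conjMap_literal (D : List (NodeExpr A)) (acc : NodeExpr A) :
    NLe acc (bigOr (D.sublists.map fun C => conjMap (literal C) acc D)) := by
  refine (nle_bigOr_conjMap_literal_of_nodup (List.nodup_dedup D) acc).trans (bigOr_nle ?_)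
  simp only [List.mem_map]
  rintro _ ⟨C, hC, rfl⟩
  have hCD : C ∈ D.sublists :=
    List.mem_sublists.2 ((List.mem_sublists.1 hC).trans (List.dedup_sublist D))
  refine (nle_conjMap (conjMap_nle_acc _ _) fun d hd => ?_).trans
    (nle_bigOr (List.mem_map.2 ⟨C, hCD, rfl⟩))
  exact conjMap_nle_of_mem (List.mem_dedup.2 hd)

end Literals

section NormalForms

variable {n : ℕ} {a : A} {C D : List (NodeExpr A)} {d t t' : NodeExpr A}

theorem mkNF_nle_lab (a : A) (C D : List (NodeExpr A)) : NLe (mkNF a C D) (.lab a) :=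
  conjMap_nle_acc D _

theorem mkNF_nle_literal (a : A) (C : List (NodeExpr A)) (hd : d ∈ D) :
    NLe (mkNF a C D) (literal C d) :=
  conjMap_nle_of_mem hd

theorem decides_mkNF_of_mem (a : A) (C : List (NodeExpr A)) (hd : d ∈ D) :
    Decides (mkNF a C D) d := by
  have h := mkNF_nle_literal a C hd
  by_cases hC : d ∈ C
  · rw [literal, if_pos hC] at h
    exact decides_of_nle h
  · rw [literal, if_neg hC] at h
    exact (decides_of_nle h).neg.congr (NDer.neg_neg d)

theorem conj_literal_literal {C' : List (NodeExpr A)} (h : ¬(d ∈ C ↔ d ∈ C')) :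
    NDer (.conj (literal C d) (literal C' d)) botN := by
  by_cases hC : d ∈ C
  · have hC' : d ∉ C' := fun hC' => h (iff_of_true hC hC')
    rw [literal, literal, if_pos hC, if_neg hC']
    exact NDer.conj_neg_self d
  · have hC' : d ∈ C' := by_contra fun hC' => h (iff_of_false hC hC')
    rw [literal, literal, if_neg hC, if_pos hC']
    exact (NDer.conj_comm _ _).trans (NDer.conj_neg_self d)

theorem conj_mkNF_of_ne {a' : A} {C' : List (NodeExpr A)} (hne : mkNF a C D ≠ mkNF a' C' D) :
    NDer (.conj (mkNF a C D) (mkNF a' C' D)) botN := by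
  by_cases haa : a = a'
  · subst haa
    obtain ⟨d, hd, hCC⟩ : ∃ d ∈ D, ¬(d ∈ C ↔ d ∈ C') := by
      by_contra! h
      refine hne (List.foldl_ext _ _ _ fun acc d hd => ?_)
      simp only [if_congr (h d hd) rfl rfl]
    exact NLe.eq_botN (((mkNF_nle_literal a C hd).conj_mono (mkNF_nle_literal a C' hd)).trans
      (.of_der (conj_literal_literal hCC)))
  · exact NLe.eq_botN (((mkNF_nle_lab a C D).conj_mono (mkNF_nle_lab a' C' D)).trans
      (.of_der (NDer.lbAx2 haa).symm))

theorem mem_Pnf_zero {α : PathExpr A} : α ∈ Pnf A 0 ↔ α = .eps := List.mem_singleton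

theorem mem_Pnf_succ {α : PathExpr A} :
    α ∈ Pnf A (n + 1) ↔ α = .eps ∨ ∃ ψ ∈ Nnf A n, ∃ β ∈ Pnf A n, α = dPath ψ β := by
  simp only [Pnf, Nnf, NF, dPath, Set.mem_ofPred_eq, List.mem_cons, List.mem_flatMap,
    List.mem_map, eq_comm (a := α)]

theorem eps_mem_Pnf (n : ℕ) : (.eps : PathExpr A) ∈ Pnf A n := by
  cases n with
  | zero => exact mem_Pnf_zero.2 rfl
  | succ n => exact mem_Pnf_succ.2 (.inl rfl)

theorem dPath_mem_Pnf {ψ : NodeExpr A} {β : PathExpr A} (hψ : ψ ∈ Nnf A n) (hβ : β ∈ Pnf A n) :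
    dPath ψ β ∈ Pnf A (n + 1) :=
  mem_Pnf_succ.2 (.inr ⟨ψ, hψ, β, hβ, rfl⟩)

theorem eq_eps_or_eq_dPath_of_mem_Pnf {γ : PathExpr A} (hγ : γ ∈ Pnf A n) :
    γ = .eps ∨ ∃ n', n = n' + 1 ∧ ∃ ψ ∈ Nnf A n', ∃ τ ∈ Pnf A n', γ = dPath ψ τ := by
  cases n with
  | zero => exact .inl (mem_Pnf_zero.1 hγ)
  | succ n => exact (mem_Pnf_succ.1 hγ).imp_right fun h => ⟨n, rfl, h⟩

theorem mem_Nnf_zero : t ∈ Nnf A 0 ↔ ∃ a : A, t = .conj (.lab a) (.eqTest .eps .eps) := by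
  simp only [Nnf, NF, Set.mem_ofPred_eq, List.mem_map, Finset.mem_toList, Finset.mem_univ,
    true_and, eq_comm (a := t)]

theorem mem_Nnf_succ : t ∈ Nnf A (n + 1) ↔ NConsistent t ∧
    ∃ C ∈ (eqAtoms (NF A (n + 1)).1).sublists, ∃ a : A,
      t = mkNF a C (eqAtoms (NF A (n + 1)).1) := by
  simp only [Nnf, NF, eqAtoms, Set.mem_ofPred_eq, List.mem_filter, List.mem_flatMap, List.mem_map,
    Finset.mem_toList, Finset.mem_univ, true_and, decide_eq_true_eq, eq_comm (a := t)]
  tauto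

theorem topN_nle_bigOr_NF (n : ℕ) : NLe (topN : NodeExpr A) (bigOr (NF A n).2) := by
  refine (NLe.of_der NDer.lbAx1).trans (bigOr_nle ?_)
  simp only [List.mem_map, Finset.mem_toList, Finset.mem_univ, true_and]
  rintro _ ⟨a, rfl⟩
  cases n with
  | zero =>
    have hmem : NodeExpr.conj (.lab a) (.eqTest .eps .eps) ∈ Nnf A 0 := mem_Nnf_zero.2 ⟨a, rfl⟩
    exact (NLe.of_der ((NDer.conj_topN _).symm.trans
      (.congr_conj (.refl _) (NDer.eqAx6 .eps).symm))).trans (nle_bigOr hmem)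
  | succ n =>
    refine (nle_bigOr_conjMap_literal (eqAtoms (NF A (n + 1)).1) _).trans (bigOr_nle ?_)
    simp only [List.mem_map]
    rintro _ ⟨C, hC, rfl⟩
    by_cases hcons : NConsistent (mkNF a C (eqAtoms (NF A (n + 1)).1))
    · exact nle_bigOr (mem_Nnf_succ.2 ⟨hcons, C, hC, a, rfl⟩)
    · exact (NLe.of_der (not_not.1 hcons)).trans (botN_nle _)

theorem NDer.topN_bigOr_NF (n : ℕ) : NDer (topN : NodeExpr A) (bigOr (NF A n).2) :=
  (topN_nle_bigOr_NF n).antisymm (nle_topN _)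

theorem exists_nle_lab_of_mem_Nnf (ht : t ∈ Nnf A n) : ∃ a : A, NLe t (.lab a) := by
  cases n with
  | zero =>
    obtain ⟨a, rfl⟩ := mem_Nnf_zero.1 ht
    exact ⟨a, nle_conj_left _ _⟩
  | succ n =>
    obtain ⟨-, C, -, a, rfl⟩ := mem_Nnf_succ.1 ht
    exact ⟨a, mkNF_nle_lab a C _⟩

theorem decides_lab (ht : t ∈ Nnf A n) (b : A) : Decides t (.lab b) := by
  obtain ⟨a, ha⟩ := exists_nle_lab_of_mem_Nnf ht
  by_cases hab : a = b
  · exact decides_of_nle (hab ▸ ha)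
  · exact .inr (NLe.eq_botN ((ha.conj_mono (.refl _)).trans (.of_der (NDer.lbAx2 hab).symm)))

theorem decides_eqTest_of_mem {α β : PathExpr A} (ht : t ∈ Nnf A n) (hα : α ∈ Pnf A n)
    (hβ : β ∈ Pnf A n) : Decides t (.eqTest α β) := by
  cases n with
  | zero =>
    rw [mem_Pnf_zero.1 hα, mem_Pnf_zero.1 hβ]
    exact (decides_topN t).congr (NDer.eqAx6 .eps).symm
  | succ n =>
    obtain ⟨-, C, -, a, rfl⟩ := mem_Nnf_succ.1 ht
    exact decides_mkNF_of_mem a C (mem_eqAtoms.2 ⟨α, hα, β, hβ, rfl⟩)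

theorem conj_eq_botN_of_mem_Nnf (ht : t ∈ Nnf A n) (ht' : t' ∈ Nnf A n) (hne : t ≠ t') :
    NDer (.conj t t') botN := by
  cases n with
  | zero =>
    obtain ⟨a, rfl⟩ := mem_Nnf_zero.1 ht
    obtain ⟨a', rfl⟩ := mem_Nnf_zero.1 ht'
    have haa : a ≠ a' := fun h => hne (h ▸ rfl)
    exact NLe.eq_botN (((nle_conj_left _ _).conj_mono (nle_conj_left _ _)).trans
      (.of_der (NDer.lbAx2 haa).symm))
  | succ n =>
    obtain ⟨-, C, -, a, rfl⟩ := mem_Nnf_succ.1 ht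
    obtain ⟨-, C', -, a', rfl⟩ := mem_Nnf_succ.1 ht'
    exact conj_mkNF_of_ne hne

theorem decides_of_mem_Nnf (ht : t ∈ Nnf A n) (ht' : t' ∈ Nnf A n) : Decides t t' := by
  by_cases h : t = t'
  · exact h ▸ decides_self t
  · exact .inr (conj_eq_botN_of_mem_Nnf ht ht' h)

end NormalForms

section Unions

def IsUnionOf (S : Set (PathExpr A)) (α : PathExpr A) : Prop :=
  ∃ l : List (PathExpr A), (∀ β ∈ l, β ∈ S) ∧ PDer α (bigUnion l)

def IsDisjOf (S : Set (NodeExpr A)) (φ : NodeExpr A) : Prop :=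
  ∃ l : List (NodeExpr A), (∀ ψ ∈ l, ψ ∈ S) ∧ NDer φ (bigOr l)

variable {S S' : Set (PathExpr A)} {α β : PathExpr A}

theorem IsUnionOf.of_mem (h : α ∈ S) : IsUnionOf S α :=
  ⟨[α], by simpa using h, (bigUnion_singleton α).symm⟩

theorem IsUnionOf.of_der (h : PDer α β) (hβ : IsUnionOf S β) : IsUnionOf S α :=
  let ⟨l, hl, hβ⟩ := hβ; ⟨l, hl, h.trans hβ⟩

theorem IsUnionOf.of_botP (h : PDer α botP) : IsUnionOf S α := ⟨[], by simp, h⟩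

theorem IsUnionOf.mono (hS : S ⊆ S') (h : IsUnionOf S α) : IsUnionOf S' α :=
  let ⟨l, hl, hα⟩ := h; ⟨l, fun β hβ => hS (hl β hβ), hα⟩

theorem IsUnionOf.union (hα : IsUnionOf S α) (hβ : IsUnionOf S β) :
    IsUnionOf S (.union α β) := by
  obtain ⟨l₁, hl₁, hα⟩ := hα
  obtain ⟨l₂, hl₂, hβ⟩ := hβ
  refine ⟨l₁ ++ l₂, fun γ hγ => ?_, (PDer.congr_union hα hβ).trans (bigUnion_append l₁ l₂).symm⟩
  rcases List.mem_append.1 hγ with hγ | hγ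
  exacts [hl₁ γ hγ, hl₂ γ hγ]

theorem isUnionOf_bigUnion {l : List (PathExpr A)} (h : ∀ β ∈ l, IsUnionOf S β) :
    IsUnionOf S (bigUnion l) := by
  induction l with
  | nil => exact .of_botP (.refl _)
  | cons β l ih => exact (h β (by simp)).union (ih fun γ hγ => h γ (by simp [hγ]))

theorem IsUnionOf.bind (h : IsUnionOf S α) (hS : ∀ β ∈ S, IsUnionOf S' β) : IsUnionOf S' α :=
  let ⟨_, hl, hα⟩ := h; (isUnionOf_bigUnion fun β hβ => hS β (hl β hβ)).of_der hα

theorem IsUnionOf.comp_left (γ : PathExpr A) (h : IsUnionOf S α)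
    (hS : ∀ β ∈ S, IsUnionOf S' (.comp γ β)) : IsUnionOf S' (.comp γ α) := by
  obtain ⟨l, hl, hα⟩ := h
  refine (isUnionOf_bigUnion ?_).of_der ((PDer.congr_comp (.refl γ) hα).trans (comp_bigUnion γ l))
  simp only [List.mem_map]
  rintro _ ⟨β, hβ, rfl⟩
  exact hS β (hl β hβ)

theorem IsUnionOf.comp_right (γ : PathExpr A) (h : IsUnionOf S α)
    (hS : ∀ β ∈ S, IsUnionOf S' (.comp β γ)) : IsUnionOf S' (.comp α γ) := by
  obtain ⟨l, hl, hα⟩ := h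
  refine (isUnionOf_bigUnion ?_).of_der ((PDer.congr_comp hα (.refl γ)).trans (bigUnion_comp l γ))
  simp only [List.mem_map]
  rintro _ ⟨β, hβ, rfl⟩
  exact hS β (hl β hβ)

theorem IsDisjOf.test_comp {T : Set (NodeExpr A)} {φ : NodeExpr A} (hφ : IsDisjOf T φ)
    (hT : ∀ ψ ∈ T, IsUnionOf S (.comp (.test ψ) α)) : IsUnionOf S (.comp (.test φ) α) := by
  obtain ⟨l, hl, hφ⟩ := hφ
  refine (isUnionOf_bigUnion ?_).of_der
    ((PDer.congr_comp ((PDer.congr_test hφ).trans (test_bigOr l)) (.refl α)).trans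
      (bigUnion_comp _ α))
  simp only [List.map_map, List.mem_map]
  rintro _ ⟨ψ, hψ, rfl⟩
  exact hT ψ (hl ψ hψ)

variable {t : NodeExpr A}

theorem IsUnionOf.decides_diam (h : IsUnionOf S α) (hS : ∀ β ∈ S, Decides t (.diam β)) :
    Decides t (.diam α) := by
  obtain ⟨l, hl, hα⟩ := h
  refine (decides_bigOr ?_).congr ((NDer.congr_diam hα).trans (diam_bigUnion l)).symm
  simp only [List.mem_map]
  rintro _ ⟨β, hβ, rfl⟩
  exact hS β (hl β hβ)

theorem IsUnionOf.decides_eqTest (hα : IsUnionOf S α) (hβ : IsUnionOf S' β)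
    (hS : ∀ γ ∈ S, ∀ δ ∈ S', Decides t (.eqTest γ δ)) : Decides t (.eqTest α β) := by
  obtain ⟨l₁, hl₁, hα⟩ := hα
  obtain ⟨l₂, hl₂, hβ⟩ := hβ
  refine (decides_bigOr ?_).congr
    ((NDer.congr_eqTest hα hβ).trans (eqTest_bigUnion_left l₁ _)).symm
  simp only [List.mem_map]
  rintro _ ⟨γ, hγ, rfl⟩
  refine (decides_bigOr ?_).congr ((NDer.eqAx1 _ _).trans (eqTest_bigUnion_left l₂ γ)).symm
  simp only [List.mem_map]
  rintro _ ⟨δ, hδ, rfl⟩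
  exact (hS γ (hl₁ γ hγ) δ (hl₂ δ hδ)).congr (NDer.eqAx1 _ _)

end Unions

section GuardedNormalForms

def guardedNF (A : Type) [Fintype A] (n b : ℕ) : Set (PathExpr A) :=
  {α | ∃ t ∈ Nnf A n, ∃ σ ∈ Pnf A n, plen σ ≤ b ∧ α = .comp (.test t) σ}

def downNF (A : Type) [Fintype A] (n b : ℕ) : Set (PathExpr A) :=
  {σ | σ ∈ Pnf A n ∧ σ ≠ .eps ∧ plen σ ≤ b}

variable {n k b c : ℕ} {t χ : NodeExpr A} {α γ δ σ : PathExpr A}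

theorem guardedNF_mono (h : b ≤ c) : guardedNF A n b ⊆ guardedNF A n c :=
  fun _ ⟨t, ht, σ, hσ, hb, hα⟩ => ⟨t, ht, σ, hσ, hb.trans h, hα⟩

theorem downNF_mono (h : b ≤ c) : downNF A n b ⊆ downNF A n c :=
  fun _ ⟨hσ, hne, hb⟩ => ⟨hσ, hne, hb.trans h⟩

theorem test_comp_mem_guardedNF (ht : t ∈ Nnf A n) (hσ : σ ∈ Pnf A n) (hb : plen σ ≤ b) :
    .comp (.test t) σ ∈ guardedNF A n b :=
  ⟨t, ht, σ, hσ, hb, rfl⟩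

theorem isDisjOf_topN (n : ℕ) : IsDisjOf (Nnf A n) topN :=
  ⟨(NF A n).2, fun _ h => h, NDer.topN_bigOr_NF n⟩

theorem decides_diam_of_mem_guardedNF (ht : t ∈ Nnf A n) (hα : α ∈ guardedNF A n b) :
    Decides t (.diam α) := by
  obtain ⟨t', ht', σ, hσ, -, rfl⟩ := hα
  exact ((decides_of_mem_Nnf ht ht').conj
    ((decides_eqTest_of_mem ht hσ hσ).congr (NDer.eqAx6 σ))).congr
      (NDer.diam_test_comp t' σ).symm

theorem decides_eqTest_of_mem_guardedNF (ht : t ∈ Nnf A n) (hγ : γ ∈ guardedNF A n b)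
    (hδ : δ ∈ guardedNF A n c) : Decides t (.eqTest γ δ) := by
  obtain ⟨p, hp, σ, hσ, -, rfl⟩ := hγ
  obtain ⟨q, hq, τ, hτ, -, rfl⟩ := hδ
  have h : NDer (.eqTest (.comp (.test p) σ) (.comp (.test q) τ))
      (.conj p (.conj q (.eqTest τ σ))) :=
    (NDer.eqAx3 _ _ _).symm.trans
      (.congr_conj (.refl p) ((NDer.eqAx1 _ _).trans (NDer.eqAx3 q τ σ).symm))
  exact ((decides_of_mem_Nnf ht hp).conj ((decides_of_mem_Nnf ht hq).conj
    (decides_eqTest_of_mem ht hτ hσ))).congr h.symm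

theorem eps_isUnionOf_guardedNF (n : ℕ) : IsUnionOf (guardedNF A n 0) .eps :=
  ((isDisjOf_topN n).test_comp fun _ ht =>
    .of_mem (test_comp_mem_guardedNF ht (eps_mem_Pnf n) le_rfl)).of_der
      (PDer.test_topN_comp .eps).symm

theorem IsDisjOf.test_isUnionOf_guardedNF {φ : NodeExpr A} (h : IsDisjOf (Nnf A n) φ) :
    IsUnionOf (guardedNF A n 0) (.test φ) :=
  (h.test_comp fun _ ht => .of_mem (test_comp_mem_guardedNF ht (eps_mem_Pnf n) le_rfl)).of_der
    (PDer.isAx5r _).symm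

theorem IsUnionOf.test_comp_of_mem_Nnf (ht : t ∈ Nnf A n) (h : IsUnionOf (guardedNF A n b) α) :
    IsUnionOf (guardedNF A n b) (.comp (.test t) α) := by
  refine h.comp_left _ fun _ ⟨t', ht', σ, hσ, hb, hα⟩ => ?_
  subst hα
  have hmerge : PDer (.comp (.test t) (.comp (.test t') σ)) (.comp (.test (.conj t t')) σ) :=
    (PDer.isAx4 _ _ _).trans (.congr_comp (PDer.test_comp_test t t') (.refl σ))
  by_cases htt : t = t'
  · subst htt
    exact (IsUnionOf.of_mem (test_comp_mem_guardedNF ht hσ hb)).of_der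
      (hmerge.trans (.congr_comp (.congr_test (NDer.conj_idem t)) (.refl σ)))
  · exact .of_botP ((hmerge.trans (.congr_comp (.congr_test (conj_eq_botN_of_mem_Nnf ht ht' htt))
      (.refl σ))).trans (PDer.botP_comp σ))

theorem IsDisjOf.test_comp_guardedNF {ψ : NodeExpr A} (hψ : IsDisjOf (Nnf A n) ψ)
    (h : IsUnionOf (guardedNF A n b) α) : IsUnionOf (guardedNF A n b) (.comp (.test ψ) α) :=
  hψ.test_comp fun _ ht => h.test_comp_of_mem_Nnf ht

theorem IsUnionOf.down_comp (h : IsUnionOf (guardedNF A n b) α) :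
    IsUnionOf (downNF A (n + 1) (b + 1)) (.comp .down α) := by
  refine h.comp_left _ fun _ ⟨t, ht, σ, hσ, hb, hα⟩ => .of_mem ?_
  subst hα
  refine ⟨dPath_mem_Pnf ht hσ, by simp, ?_⟩
  simp only [plen]
  omega

theorem IsUnionOf.guardedNF_of_downNF (h : IsUnionOf (downNF A n b) α) :
    IsUnionOf (guardedNF A n b) α :=
  h.bind fun σ ⟨hσ, _, hb⟩ => ((isDisjOf_topN n).test_comp fun _ ht =>
    .of_mem (test_comp_mem_guardedNF ht hσ hb)).of_der (PDer.test_topN_comp σ).symm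

theorem down_isUnionOf_downNF (n : ℕ) : IsUnionOf (downNF A (n + 1) 1) (.down : PathExpr A) :=
  (eps_isUnionOf_guardedNF n).down_comp.of_der (PDer.isAx5r _).symm

theorem IsUnionOf.dPath_comp {ψ : NodeExpr A} (hψ : ψ ∈ Nnf A n)
    (h : IsUnionOf (guardedNF A n b) (.comp γ δ)) :
    IsUnionOf (downNF A (n + 1) (b + 1)) (.comp (dPath ψ γ) δ) :=
  (h.test_comp_of_mem_Nnf hψ).down_comp.of_der
    ((PDer.isAx4 _ _ _).symm.trans (.congr_comp (.refl _) (PDer.isAx4 _ _ _).symm))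

theorem exists_map_eq_of_forall_mem_guardedNF {l : List (PathExpr A)}
    (hl : ∀ β ∈ l, β ∈ guardedNF A n b) :
    ∃ l' : List (NodeExpr A × PathExpr A), (∀ p ∈ l', p.1 ∈ Nnf A n ∧ p.2 ∈ Pnf A n) ∧
      l'.map (fun p => .comp (.test p.1) p.2) = l := by
  induction l with
  | nil => exact ⟨[], by simp, rfl⟩
  | cons β l ih =>
    obtain ⟨t, ht, σ, hσ, -, rfl⟩ := hl β List.mem_cons_self
    obtain ⟨l', hl', rfl⟩ := ih fun γ hγ => hl γ (List.mem_cons_of_mem _ hγ)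
    refine ⟨(t, σ) :: l', fun p hp => ?_, rfl⟩
    rcases List.mem_cons.1 hp with rfl | hp
    exacts [⟨ht, hσ⟩, hl' p hp]

end GuardedNormalForms

section Selection

variable {n k : ℕ} {t φ ψ χ : NodeExpr A}

theorem isDisjOf_of_decides (h : ∀ t ∈ Nnf A n, Decides t φ) : IsDisjOf (Nnf A n) φ := by
  let l := (NF A n).2.filter fun t => decide (NLe t φ)
  refine ⟨l, fun t ht => (List.mem_filter.1 ht).1, NLe.antisymm ?_ (bigOr_nle fun t ht => ?_)⟩
  · refine (((NLe.refl φ).conj ((nle_topN φ).trans (topN_nle_bigOr_NF n))).trans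
      (.of_der (conj_bigOr φ _))).trans (bigOr_nle ?_)
    simp only [List.mem_map]
    rintro _ ⟨t, ht, rfl⟩
    rcases h t ht with h | h
    · exact (nle_conj_right φ t).trans
        (nle_bigOr (List.mem_filter.2 ⟨ht, decide_eq_true (NLe.of_der_conj h.symm)⟩))
    · exact (NLe.of_der ((NDer.conj_comm φ t).trans h)).trans (botN_nle _)
  · exact of_decide_eq_true (List.mem_filter.1 ht).2

theorem IsDisjOf.decides (h : IsDisjOf (Nnf A n) φ) (ht : t ∈ Nnf A n) : Decides t φ :=
  let ⟨_, hl, hφ⟩ := h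
  (decides_bigOr fun _ ht' => decides_of_mem_Nnf ht (hl _ ht')).congr hφ.symm

theorem isDisjOf_lab (n : ℕ) (a : A) : IsDisjOf (Nnf A n) (.lab a) :=
  isDisjOf_of_decides fun _ ht => decides_lab ht a

theorem IsDisjOf.neg (h : IsDisjOf (Nnf A n) φ) : IsDisjOf (Nnf A n) (.neg φ) :=
  isDisjOf_of_decides fun _ ht => (h.decides ht).neg

theorem IsDisjOf.conj (hφ : IsDisjOf (Nnf A n) φ) (hψ : IsDisjOf (Nnf A n) ψ) :
    IsDisjOf (Nnf A n) (.conj φ ψ) :=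
  isDisjOf_of_decides fun _ ht => (hφ.decides ht).conj (hψ.decides ht)

theorem IsUnionOf.isDisjOf_diam {α : PathExpr A} {b : ℕ} (h : IsUnionOf (guardedNF A n b) α) :
    IsDisjOf (Nnf A n) (.diam α) :=
  isDisjOf_of_decides fun _ ht => h.decides_diam fun _ hβ => decides_diam_of_mem_guardedNF ht hβ

theorem IsUnionOf.isDisjOf_eqTest {α β : PathExpr A} {b c : ℕ}
    (hα : IsUnionOf (guardedNF A n b) α) (hβ : IsUnionOf (guardedNF A n c) β) :
    IsDisjOf (Nnf A n) (.eqTest α β) :=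
  isDisjOf_of_decides fun _ ht => hα.decides_eqTest hβ fun _ hγ _ hδ =>
    decides_eqTest_of_mem_guardedNF ht hγ hδ

theorem decides_of_mem_Nnf_of_decides_eqTest (hχ : χ ∈ Nnf A k)
    (hatoms : ∀ α ∈ Pnf A k, ∀ β ∈ Pnf A k, Decides t (.eqTest α β)) (ht : t ∈ Nnf A n) :
    Decides t χ := by
  cases k with
  | zero =>
    obtain ⟨a, rfl⟩ := mem_Nnf_zero.1 hχ
    exact (decides_lab ht a).conj (hatoms _ (eps_mem_Pnf 0) _ (eps_mem_Pnf 0))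
  | succ k =>
    obtain ⟨-, C, -, a, rfl⟩ := mem_Nnf_succ.1 hχ
    refine decides_conjMap (decides_lab ht a) fun d hd => ?_
    obtain ⟨α, hα, β, hβ, rfl⟩ := mem_eqAtoms.1 hd
    by_cases hC : NodeExpr.eqTest α β ∈ C
    · rw [if_pos hC]; exact hatoms α hα β hβ
    · rw [if_neg hC]; exact (hatoms α hα β hβ).neg

theorem isDisjOf_of_mem_Nnf_of_paths (hχ : χ ∈ Nnf A k)
    (hpaths : ∀ δ ∈ Pnf A k, ∃ b, IsUnionOf (guardedNF A n b) δ) : IsDisjOf (Nnf A n) χ := by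
  refine isDisjOf_of_decides fun t ht => decides_of_mem_Nnf_of_decides_eqTest hχ ?_ ht
  intro α hα β hβ
  obtain ⟨b, hαb⟩ := hpaths α hα
  obtain ⟨c, hβc⟩ := hpaths β hβ
  exact (hαb.isDisjOf_eqTest hβc).decides ht

theorem isUnionOf_guardedNF_of_mem_Pnf :
    ∀ {k n : ℕ}, k ≤ n → ∀ {δ : PathExpr A}, δ ∈ Pnf A k → IsUnionOf (guardedNF A n (plen δ)) δ
  | 0, n, _, δ, hδ => by
    rw [mem_Pnf_zero.1 hδ]
    exact eps_isUnionOf_guardedNF n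
  | k + 1, n, hk, δ, hδ => by
    obtain ⟨n, rfl⟩ : ∃ n', n = n' + 1 := ⟨n - 1, by omega⟩
    have hk : k ≤ n := by omega
    rcases mem_Pnf_succ.1 hδ with rfl | ⟨ψ, hψ, β, hβ, rfl⟩
    · exact eps_isUnionOf_guardedNF _
    · have hψ : IsDisjOf (Nnf A n) ψ := isDisjOf_of_mem_Nnf_of_paths hψ fun δ hδ =>
        ⟨_, isUnionOf_guardedNF_of_mem_Pnf hk hδ⟩
      refine ((hψ.test_comp_guardedNF (isUnionOf_guardedNF_of_mem_Pnf hk hβ)).down_comp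
        |>.guardedNF_of_downNF).mono (guardedNF_mono ?_)
      simp only [dPath, plen]
      omega

theorem isDisjOf_of_mem_Nnf (hk : k ≤ n) (hχ : χ ∈ Nnf A k) : IsDisjOf (Nnf A n) χ :=
  isDisjOf_of_mem_Nnf_of_paths hχ fun _ hδ => ⟨_, isUnionOf_guardedNF_of_mem_Pnf hk hδ⟩

end Selection

section Composition

variable {n k b c : ℕ} {χ : NodeExpr A} {γ δ : PathExpr A}

theorem test_comp_isUnionOf_guardedNF (hk : k ≤ n) (hχ : χ ∈ Nnf A k) (hδ : δ ∈ Pnf A k) :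
    IsUnionOf (guardedNF A n (plen δ)) (.comp (.test χ) δ) :=
  (isDisjOf_of_mem_Nnf hk hχ).test_comp_guardedNF (isUnionOf_guardedNF_of_mem_Pnf hk hδ)

/- Pushing `[χ]δ` of level `k` down the `len γ` steps of `γ` stays within level `n`; this is
what the summand `len α + dd β` of `dd(αβ)` pays for. -/
theorem comp_test_isUnionOf_guardedNF {n : ℕ} {γ : PathExpr A} (hγ : γ ∈ Pnf A n)
    (hχ : χ ∈ Nnf A k) (hδ : δ ∈ Pnf A k) (hk : plen γ + k ≤ n) :
    IsUnionOf (guardedNF A n (plen γ + plen δ)) (.comp γ (.comp (.test χ) δ)) := by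
  rcases eq_eps_or_eq_dPath_of_mem_Pnf hγ with rfl | ⟨n, rfl, ψ, hψ, τ, hτ, rfl⟩
  · exact ((test_comp_isUnionOf_guardedNF (by simpa [plen] using hk) hχ hδ).of_der
      (PDer.isAx5l _)).mono (guardedNF_mono (by simp [plen]))
  · have hτk : plen τ + k ≤ n := by simp only [dPath, plen] at hk; omega
    refine ((comp_test_isUnionOf_guardedNF hτ hχ hδ hτk).dPath_comp hψ).guardedNF_of_downNF.mono
      (guardedNF_mono ?_)
    simp only [dPath, plen]
    omega
termination_by n

theorem comp_test_isUnionOf_downNF (hγ : γ ∈ Pnf A n) (hγε : γ ≠ .eps) (hχ : χ ∈ Nnf A k)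
    (hδ : δ ∈ Pnf A k) (hk : plen γ + k ≤ n) :
    IsUnionOf (downNF A n (plen γ + plen δ)) (.comp γ (.comp (.test χ) δ)) := by
  rcases eq_eps_or_eq_dPath_of_mem_Pnf hγ with rfl | ⟨n, rfl, ψ, hψ, τ, hτ, rfl⟩
  · exact absurd rfl hγε
  · have hτk : plen τ + k ≤ n := by simp only [dPath, plen] at hk; omega
    refine ((comp_test_isUnionOf_guardedNF hτ hχ hδ hτk).dPath_comp hψ).mono (downNF_mono ?_)
    simp only [dPath, plen]
    omega

theorem IsUnionOf.comp_guardedNF (hγ : IsUnionOf (guardedNF A n b) γ)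
    (hδ : IsUnionOf (guardedNF A k c) δ) (hbk : b + k ≤ n) :
    IsUnionOf (guardedNF A n (b + c)) (.comp γ δ) := by
  refine hγ.comp_right δ fun _ ⟨t, ht, σ, hσ, hσb, hα⟩ =>
    hδ.comp_left _ fun _ ⟨t', ht', τ, hτ, hτc, hβ⟩ => ?_
  subst hα hβ
  exact (((comp_test_isUnionOf_guardedNF hσ ht' hτ (by omega)).test_comp_of_mem_Nnf ht).of_der
    (PDer.isAx4 _ _ _).symm).mono (guardedNF_mono (by omega))

theorem IsUnionOf.comp_downNF (hγ : IsUnionOf (downNF A n b) γ)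
    (hδ : IsUnionOf (guardedNF A k c) δ) (hbk : b + k ≤ n) :
    IsUnionOf (downNF A n (b + c)) (.comp γ δ) := by
  refine hγ.comp_right δ fun g ⟨hg, hgε, hgb⟩ =>
    hδ.comp_left g fun _ ⟨t', ht', τ, hτ, hτc, hβ⟩ => ?_
  subst hβ
  exact (comp_test_isUnionOf_downNF hg hgε ht' hτ (by omega)).mono (downNF_mono (by omega))

end Composition

mutual

theorem isDisjOf_Nnf_of_ndd_le : ∀ (φ : NodeExpr A) {n : ℕ}, ndd φ ≤ n → IsDisjOf (Nnf A n) φ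
  | .lab a, n, _ => isDisjOf_lab n a
  | .neg φ, _, h => (isDisjOf_Nnf_of_ndd_le φ h).neg
  | .conj φ ψ, _, h =>
    (isDisjOf_Nnf_of_ndd_le φ (le_of_max_le_left h)).conj
      (isDisjOf_Nnf_of_ndd_le ψ (le_of_max_le_right h))
  | .diam α, _, h => (isUnionOf_guardedNF_of_pdd_le α h).isDisjOf_diam
  | .eqTest α β, _, h =>
    (isUnionOf_guardedNF_of_pdd_le α (le_of_max_le_left h)).isDisjOf_eqTest
      (isUnionOf_guardedNF_of_pdd_le β (le_of_max_le_right h))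

theorem isUnionOf_guardedNF_of_pdd_le :
    ∀ (α : PathExpr A) {n : ℕ}, pdd α ≤ n → IsUnionOf (guardedNF A n (plen α)) α
  | .eps, n, _ => eps_isUnionOf_guardedNF n
  | .down, n, h => by
    obtain ⟨n, rfl⟩ : ∃ n', n = n' + 1 := ⟨n - 1, by simp only [pdd] at h; omega⟩
    exact (down_isUnionOf_downNF n).guardedNF_of_downNF
  | .test φ, _, h => (isDisjOf_Nnf_of_ndd_le φ h).test_isUnionOf_guardedNF
  | .comp γ δ, _, h =>
    (isUnionOf_guardedNF_of_pdd_le γ (le_of_max_le_left (le_of_max_le_left h))).comp_guardedNF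
      (isUnionOf_guardedNF_of_pdd_le δ le_rfl) (le_of_max_le_right h)
  | .union γ δ, _, h =>
    ((isUnionOf_guardedNF_of_pdd_le γ (le_of_max_le_left h)).mono
      (guardedNF_mono (le_max_left _ _))).union
    ((isUnionOf_guardedNF_of_pdd_le δ (le_of_max_le_right h)).mono
      (guardedNF_mono (le_max_right _ _)))

theorem isUnionOf_downNF_of_pdd_le :
    ∀ (α : PathExpr A) {n : ℕ}, pdd α ≤ n → startsWithDown α → IsUnionOf (downNF A n (plen α)) α
  | .down, n, h, _ => by
    obtain ⟨n, rfl⟩ : ∃ n', n = n' + 1 := ⟨n - 1, by simp only [pdd] at h; omega⟩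
    exact down_isUnionOf_downNF n
  | .comp γ δ, _, h, hγ =>
    (isUnionOf_downNF_of_pdd_le γ (le_of_max_le_left (le_of_max_le_left h)) hγ).comp_downNF
      (isUnionOf_guardedNF_of_pdd_le δ le_rfl) (le_of_max_le_right h)
  | .eps, _, _, h | .test _, _, _, h | .union _ _, _, _, h => h.elim

end

end XPathMinus

/-- Normal form theorem for `XPath↓⁻`. -/
theorem XPathMinus.normal_form {A : Type} [Fintype A] (hA : 1 < Fintype.card A) :
    (∀ (n : ℕ) (φ : NodeExpr A), NConsistent φ → ndd φ = n →
      ∃ l : List (NodeExpr A), l ≠ [] ∧ (∀ ψ ∈ l, ψ ∈ Nnf A n) ∧ NDer φ (bigOr l)) ∧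
    (∀ (n : ℕ) (α : PathExpr A), PConsistent α → pdd α = n →
      (∃ l : List (NodeExpr A × PathExpr A), l ≠ [] ∧
        (∀ p ∈ l, p.1 ∈ Nnf A n ∧ p.2 ∈ Pnf A n) ∧
        PDer α (bigUnion (l.map fun p => PathExpr.comp (.test p.1) p.2))) ∧
      ((α = PathExpr.eps ∨ startsWithDown α) →
        ∃ l : List (PathExpr A), l ≠ [] ∧ (∀ β ∈ l, β ∈ Pnf A n) ∧
          PDer α (bigUnion l))) := by
  refine ⟨fun n φ hφ hn => ?_, fun n α hα hn => ⟨?_, ?_⟩⟩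
  · obtain ⟨l, hl, hder⟩ := isDisjOf_Nnf_of_ndd_le φ hn.le
    exact ⟨l, by rintro rfl; exact hφ hder, hl, hder⟩
  · obtain ⟨l, hl, hder⟩ := isUnionOf_guardedNF_of_pdd_le α hn.le
    obtain ⟨l', hl', rfl⟩ := exists_map_eq_of_forall_mem_guardedNF hl
    exact ⟨l', by rintro rfl; exact hα hder, hl', hder⟩
  · rintro (rfl | hs)
    · exact ⟨[.eps], List.cons_ne_nil _ _, by simpa using eps_mem_Pnf n,
        (bigUnion_singleton _).symm⟩
    · obtain ⟨l, hl, hder⟩ := isUnionOf_downNF_of_pdd_le α hn.le hs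
      exact ⟨l, by rintro rfl; exact hα hder, fun β hβ => (hl β hβ).1, hder⟩
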